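/- Let r ≥ 1. If ms_r(λK_{n_1,…,n_k}) = r·n_1, then n_1^{u−1} divides r_2, or r_2 > 0 and (⌊r_2/n_1^{u−1}⌋ + 1)·⌊λN/r_2⌋ ≤ λN' ≤ ⌊r_2/n_1^{u−1}⌋·(⌊λN/r_2⌋ + 1). -/

import Mathlib

/-- A hypergraph: a finite vertex type, a finite edge (label) type and an incidence
relation; distinct (parallel) edges may be incident with the same vertices. -/
structure MSHypergraph where
  V : Type
  E : Type
  fintV : Fintype V
  fintE : Fintype E
  inc : E → V → Bool

namespace MSHypergraph

/-- The number ε of edges of `H`. -/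
def edgeCard (H : MSHypergraph) : ℕ :=
  letI := H.fintE
  Fintype.card H.E

/-- The degree of a vertex: the number of edges incident with it. -/
def degree (H : MSHypergraph) (v : H.V) : ℕ :=
  letI := H.fintE
  (Finset.univ.filter (fun e => H.inc e v = true)).card

/-- The maximum degree Δ(H). -/
def maxDegree (H : MSHypergraph) : ℕ :=
  letI := H.fintV
  Finset.univ.sup H.degree

/-- An ordering (labelling) of `H`, encoded by its ε-periodic enumeration:
`f i` is the edge whose label is `i % ε`; on `[ε]`, `f` is a bijection onto the
edge set. -/
structure IsOrdering (H : MSHypergraph) (f : ℕ → H.E) : Prop where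
  periodic : ∀ i, f (i + H.edgeCard) = f i
  inj : ∀ i j, i < H.edgeCard → j < H.edgeCard → f i = f j → i = j
  surj : ∀ e : H.E, ∃ i, i < H.edgeCard ∧ f i = e

/-- The degree of `v` in the hypergraph `H(S)` formed (with multiplicity) by the
sequence `S` of `s` (cyclically) consecutive edges with labels `j, …, j+s-1`
taken modulo ε. -/
def windowDeg (H : MSHypergraph) (f : ℕ → H.E) (j s : ℕ) (v : H.V) : ℕ :=
  ((Finset.range s).filter (fun i => H.inc (f (j + i)) v = true)).card

/-- Every sequence of `s` consecutive edges of the ordering `f` forms a hypergraph of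
maximum degree at most `r`.  A window of `s` consecutive edges starts at a label `j`
with `j + s ≤ (a+1)·ε`, where `a·ε ≤ s < (a+1)·ε` (i.e. `a = s / ε`). -/
def msOK (H : MSHypergraph) (f : ℕ → H.E) (r s : ℕ) : Prop :=
  ∀ j v, j + s ≤ (s / H.edgeCard + 1) * H.edgeCard → H.windowDeg f j s v ≤ r

/-- Every sequence of `s` cyclically consecutive edges of the ordering `f` forms a
hypergraph of maximum degree at most `r`. -/
def cmsOK (H : MSHypergraph) (f : ℕ → H.E) (r s : ℕ) : Prop :=
  ∀ j v, H.windowDeg f j s v ≤ r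

/-- ms_r(ℓ): the largest `s` such that every `s` consecutive edges of `ℓ` form a
hypergraph of maximum degree at most `r`. -/
noncomputable def msrOf (H : MSHypergraph) (f : ℕ → H.E) (r : ℕ) : ℕ :=
  sSup {s | H.msOK f r s}

/-- cms_r(ℓ). -/
noncomputable def cmsrOf (H : MSHypergraph) (f : ℕ → H.E) (r : ℕ) : ℕ :=
  sSup {s | H.cmsOK f r s}

/-- ms_r(H): the maximum of ms_r(ℓ) over all orderings ℓ of H. -/
noncomputable def msr (H : MSHypergraph) (r : ℕ) : ℕ :=
  sSup {s | ∃ f, H.IsOrdering f ∧ H.msOK f r s}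

/-- cms_r(H): the maximum of cms_r(ℓ) over all orderings ℓ of H. -/
noncomputable def cmsr (H : MSHypergraph) (r : ℕ) : ℕ :=
  sSup {s | ∃ f, H.IsOrdering f ∧ H.cmsOK f r s}

end MSHypergraph

/-- The complete multi-k-partite k-graph λ·K_{n 0, …, n (k-1)} with edge
multiplicity `lam`: the vertex set is the disjoint union of the parts
`N_i = Fin (n i)`, and for each choice of one vertex from each part there are
`lam` parallel edges incident with exactly those `k` vertices. -/
def lamK (k lam : ℕ) (n : Fin k → ℕ) : MSHypergraph where
  V := Σ i : Fin k, Fin (n i)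
  E := Fin lam × (∀ i : Fin k, Fin (n i))
  fintV := inferInstance
  fintE := inferInstance
  inc := fun e v => decide (e.2 v.1 = v.2)

/-! In an ordering attaining `ms_r = r·n₁`, write `r·n₁ = r₁·ε + p` with `p = r₂·n₁ < ε`.
Every window of `p` consecutive edges then meets each vertex of the `u` smallest parts exactly
`r₂` times, so sliding the window by one step shows that the edges at positions `j` and `j + p`
agree on those parts: the restriction of the ordering to the first `u` coordinates is
`p`-periodic on `[0, ε)`. Each of the `n₁^u` possible restrictions occurs `λN'` times in `[0, ε)`,
hence between `⌊ε/p⌋·c` and `(⌊ε/p⌋ + 1)·c` times if it occurs `c` times in `[0, p)`. These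
counts `c` sum to `p = r₂·n₁`, so by pigeonhole, when `n₁^(u-1) ∤ r₂`, one of them is at most
`⌊r₂/n₁^(u-1)⌋` and another at least `⌊r₂/n₁^(u-1)⌋ + 1`; with `⌊ε/p⌋ = ⌊λN/r₂⌋` these are the
two inequalities. -/

open Finset

namespace Nat

theorem count_congr_of_lt {P Q : ℕ → Prop} [DecidablePred P] [DecidablePred Q] {b : ℕ}
    (h : ∀ k < b, P k ↔ Q k) : count P b = count Q b := by
  simp only [count_eq_card_filter_range]
  exact congrArg card <| filter_congr fun k hk => h k (mem_range.1 hk)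

theorem count_eq_div_mul_add_count_mod {P : ℕ → Prop} [DecidablePred P] {p ε : ℕ}
    (hper : ∀ j, j + p < ε → (P (j + p) ↔ P j)) :
    count P ε = ε / p * count P p + count P (ε % p) := by
  rcases p.eq_zero_or_pos with rfl | hp
  · simp
  suffices ∀ b ≤ ε, count P b = b / p * count P p + count P (b % p) from this ε le_rfl
  intro b
  induction b using Nat.strong_induction_on with
  | _ b ih =>
    intro hb
    rcases lt_or_ge b p with hbp | hpb
    · simp [Nat.div_eq_of_lt hbp, Nat.mod_eq_of_lt hbp]
    obtain ⟨b, rfl⟩ := Nat.exists_eq_add_of_le' hpb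
    have hshift : count (fun k => P (p + k)) b = count P b :=
      count_congr_of_lt fun k hk => by rw [add_comm]; exact hper k (by omega)
    rw [add_comm, count_add, hshift, ih b (by omega) (by omega), Nat.add_div_left _ hp,
      Nat.add_mod_left]
    ring

end Nat

theorem count_bounds_of_periodic_of_not_dvd {α : Type*} [Fintype α] [DecidableEq α] (g : ℕ → α)
    {p ε C : ℕ} (hper : ∀ j, j + p < ε → g (j + p) = g j)
    (hC : ∀ a, Nat.count (fun j => g j = a) ε = C) (hdvd : ¬ Fintype.card α ∣ p) :
    (p / Fintype.card α + 1) * (ε / p) ≤ C ∧ C ≤ p / Fintype.card α * (ε / p + 1) := by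
  set M := Fintype.card α
  set c := fun a => Nat.count (fun j => g j = a) p
  have hp : 0 < p := Nat.pos_of_ne_zero fun h => hdvd (h ▸ dvd_zero M)
  have hM : 0 < M := Fintype.card_pos_iff.2 ⟨g 0⟩
  have hbounds (a : α) : ε / p * c a ≤ C ∧ C ≤ (ε / p + 1) * c a := by
    have hsplit := Nat.count_eq_div_mul_add_count_mod (P := fun j => g j = a) (ε := ε)
      fun j hj => by rw [hper j hj]
    have hrest := Nat.count_monotone (fun j => g j = a) (Nat.mod_lt ε hp).le
    rw [hC] at hsplit
    constructor <;> linarith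
  have hsum : ∑ a, c a = p := by
    simp only [c, Nat.count_eq_card_filter_range]
    rw [← card_eq_sum_card_fiberwise (fun _ _ => mem_coe.2 (mem_univ _)), card_range]
  obtain ⟨a, -, ha⟩ := exists_lt_of_sum_lt (s := univ) (f := c) (g := fun _ => p / M + 1) <| by
    rw [hsum, sum_const, card_univ, smul_eq_mul]
    exact Nat.lt_mul_div_succ p hM
  obtain ⟨b, -, hb⟩ := exists_lt_of_sum_lt (s := univ) (f := fun _ => p / M) (g := c) <| by
    rw [hsum, sum_const, card_univ, smul_eq_mul]
    exact (Nat.mul_div_le p M).lt_of_ne fun h => hdvd ⟨_, h.symm⟩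
  constructor
  · calc (p / M + 1) * (ε / p) ≤ ε / p * c b := by rw [mul_comm]; gcongr; exact hb
      _ ≤ C := (hbounds b).1
  · calc C ≤ (ε / p + 1) * c a := (hbounds a).2
      _ ≤ p / M * (ε / p + 1) := by rw [mul_comm]; gcongr; omega

theorem Fintype.card_filter_restrict_eq {ι : Type*} [Fintype ι] [DecidableEq ι] {β : ι → Type*}
    [∀ i, Fintype (β i)] [∀ i, DecidableEq (β i)] (s : Finset ι) (a : ∀ i : s, β i) :
    #{t : ∀ i, β i | s.restrict t = a} = ∏ i ∈ sᶜ, Fintype.card (β i) := by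
  have hfiber : ({t : ∀ i, β i | s.restrict t = a} : Finset _)
      = Fintype.piFinset fun i => if h : i ∈ s then {a ⟨i, h⟩} else univ := by
    ext t
    simp only [mem_filter, mem_univ, true_and, Fintype.mem_piFinset, funext_iff, Subtype.forall,
      restrict]
    refine forall_congr' fun i => ?_
    split_ifs with h <;> simp [h]
  rw [hfiber, Fintype.card_piFinset, ← prod_mul_prod_compl s]
  rw [Finset.prod_eq_one (s := s) fun i hi => by rw [dif_pos hi, card_singleton], one_mul]
  refine Finset.prod_congr rfl fun i hi => ?_
  rw [dif_neg (mem_compl.1 hi), card_univ]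

theorem Fintype.card_filter_snd {α β : Type*} [Fintype α] [Fintype β] (P : β → Prop)
    [DecidablePred P] : #{e : α × β | P e.2} = Fintype.card α * #{b | P b} := by
  rw [← univ_product_univ, filter_product_right, card_product, card_univ]

theorem Finset.prod_erase_univ_eq_of_eq {ι M : Type*} [Fintype ι] [DecidableEq ι] [CommMonoid M]
    {f : ι → M} {i j : ι} (h : f i = f j) :
    ∏ l ∈ univ.erase i, f l = ∏ l ∈ univ.erase j, f l := by
  rcases eq_or_ne i j with rfl | hij
  · rfl
  rw [← mul_prod_erase _ f (mem_erase.2 ⟨hij.symm, mem_univ j⟩),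
    ← mul_prod_erase _ f (mem_erase.2 ⟨hij, mem_univ i⟩), erase_right_comm, h]

namespace MSHypergraph

variable {H : MSHypergraph} {f : ℕ → H.E}

theorem windowDeg_eq_count (j s : ℕ) (v : H.V) :
    H.windowDeg f j s v = Nat.count (fun i => H.inc (f (j + i)) v = true) s :=
  (Nat.count_eq_card_filter_range _ _).symm

theorem windowDeg_add (j s t : ℕ) (v : H.V) :
    H.windowDeg f j (s + t) v = H.windowDeg f j s v + H.windowDeg f (j + s) t v := by
  simp only [windowDeg_eq_count, Nat.count_add, add_assoc]

theorem windowDeg_one (j : ℕ) (v : H.V) :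
    H.windowDeg f j 1 v = if H.inc (f j) v = true then 1 else 0 := by
  simp [windowDeg_eq_count, Nat.count_succ]

theorem windowDeg_one_add_windowDeg_succ (j s : ℕ) (v : H.V) :
    H.windowDeg f j 1 v + H.windowDeg f (j + 1) s v
      = H.windowDeg f j s v + H.windowDeg f (j + s) 1 v := by
  rw [← windowDeg_add, ← windowDeg_add, add_comm]

theorem degree_le_edgeCard (v : H.V) : H.degree v ≤ H.edgeCard :=
  card_filter_le _ _

theorem windowDeg_mono {s s' : ℕ} (h : s ≤ s') (j : ℕ) (v : H.V) :
    H.windowDeg f j s v ≤ H.windowDeg f j s' v := by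
  simp only [windowDeg_eq_count]
  exact Nat.count_monotone _ h

theorem inc_add_eq_of_windowDeg_eq {j p : ℕ} {v : H.V}
    (h : H.windowDeg f j p v = H.windowDeg f (j + 1) p v) :
    H.inc (f (j + p)) v = H.inc (f j) v := by
  have hslide := windowDeg_one_add_windowDeg_succ (f := f) j p v
  rw [windowDeg_one, windowDeg_one, h] at hslide
  revert hslide
  cases H.inc (f (j + p)) v <;> cases H.inc (f j) v <;> simp

theorem exists_isOrdering (h : 0 < H.edgeCard) : ∃ f, H.IsOrdering f := by
  let := H.fintE
  let e : H.E ≃ Fin H.edgeCard := Fintype.equivFin H.E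
  refine ⟨fun i => e.symm ⟨i % H.edgeCard, Nat.mod_lt _ h⟩, fun i => by simp, ?_, fun x => ?_⟩
  · intro i j hi hj hij
    simpa [Nat.mod_eq_of_lt hi, Nat.mod_eq_of_lt hj] using e.symm.injective hij
  · exact ⟨e x, (e x).isLt, by simp [Nat.mod_eq_of_lt (e x).isLt]⟩

theorem IsOrdering.card_filter_range (hf : H.IsOrdering f) (P : H.E → Prop) [DecidablePred P] :
    letI := H.fintE;
    #{j ∈ range H.edgeCard | P (f j)} = #{e | P e} := by
  let := H.fintE
  refine card_nbij f (fun j hj => ?_) (fun i hi j hj hij => ?_) fun e he => ?_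
  · simp_all
  · simp only [coe_filter, mem_range, Set.mem_ofPred_eq] at hi hj
    exact hf.inj i j hi.1 hj.1 hij
  · obtain ⟨j, hj, rfl⟩ := hf.surj e
    exact ⟨j, by simp_all⟩

theorem IsOrdering.windowDeg_edgeCard (hf : H.IsOrdering f) (j : ℕ) (v : H.V) :
    H.windowDeg f j H.edgeCard v = H.degree v := by
  induction j with
  | zero => simpa [windowDeg, degree] using hf.card_filter_range (fun e => H.inc e v = true)
  | succ j ih =>
    have hslide := windowDeg_one_add_windowDeg_succ (f := f) j H.edgeCard v
    rw [windowDeg_one, windowDeg_one, hf.periodic] at hslide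
    omega

theorem IsOrdering.windowDeg_add_mul (hf : H.IsOrdering f) (j m s : ℕ) (v : H.V) :
    H.windowDeg f (j + m * H.edgeCard) s v = H.windowDeg f j s v := by
  have hper : Function.Periodic f (m * H.edgeCard) := by
    exact_mod_cast Function.Periodic.nat_mul (f := f) hf.periodic m
  simp only [windowDeg_eq_count, add_right_comm j, hper _]

theorem IsOrdering.windowDeg_mul (hf : H.IsOrdering f) (j m : ℕ) (v : H.V) :
    H.windowDeg f j (m * H.edgeCard) v = m * H.degree v := by
  induction m with
  | zero => simp [windowDeg]
  | succ m ih => rw [Nat.succ_mul, windowDeg_add, ih, hf.windowDeg_edgeCard, Nat.succ_mul]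

theorem IsOrdering.lt_of_msOK (hf : H.IsOrdering f) {r s : ℕ} {v : H.V} (hv : 0 < H.degree v)
    (hok : H.msOK f r s) : s < (r + 1) * H.edgeCard := by
  have hε : 0 < H.edgeCard := hv.trans_le (degree_le_edgeCard v)
  have hfirst : s / H.edgeCard * H.degree v ≤ H.windowDeg f 0 s v := by
    rw [← hf.windowDeg_mul]
    exact windowDeg_mono (Nat.div_mul_le_self s _) 0 v
  have hwin := hok 0 v (by rw [zero_add, add_one_mul]; exact (Nat.lt_div_mul_add hε).le)
  have hquot : s / H.edgeCard ≤ r := (Nat.le_mul_of_pos_right _ hv).trans (hfirst.trans hwin)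
  calc s < s / H.edgeCard * H.edgeCard + H.edgeCard := Nat.lt_div_mul_add hε
    _ ≤ (r + 1) * H.edgeCard := by rw [add_one_mul]; gcongr

theorem exists_isOrdering_msOK_msr (r : ℕ) {v : H.V} (hv : 0 < H.degree v) :
    ∃ f, H.IsOrdering f ∧ H.msOK f r (H.msr r) := by
  obtain ⟨f₀, hf₀⟩ := exists_isOrdering (hv.trans_le (degree_le_edgeCard v))
  exact Nat.sSup_mem (s := {s | ∃ f, H.IsOrdering f ∧ H.msOK f r s})
    ⟨0, f₀, hf₀, fun j v _ => by simp [windowDeg]⟩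
    ⟨(r + 1) * H.edgeCard, fun s ⟨_, hf, hok⟩ => (hf.lt_of_msOK hv hok).le⟩

theorem IsOrdering.mul_degree_add_windowDeg_le (hf : H.IsOrdering f) {r a p j : ℕ} {v : H.V}
    (hok : H.msOK f r (a * H.edgeCard + p)) (hp : p < H.edgeCard) (hj : j + p ≤ H.edgeCard) :
    a * H.degree v + H.windowDeg f j p v ≤ r := by
  have hε : 0 < H.edgeCard := by omega
  have hquot : (a * H.edgeCard + p) / H.edgeCard = a := by
    rw [add_comm, Nat.add_mul_div_right _ _ hε, Nat.div_eq_of_lt hp, zero_add]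
  have hwin := hok j v (by rw [hquot]; linarith)
  rwa [windowDeg_add, hf.windowDeg_mul, hf.windowDeg_add_mul] at hwin

end MSHypergraph

section CompleteMultipartite

open MSHypergraph

variable {k lam : ℕ} {n : Fin k → ℕ}

theorem lamK_edgeCard : (lamK k lam n).edgeCard = lam * ∏ i, n i := by
  change Fintype.card (Fin lam × ∀ i, Fin (n i)) = _
  simp [Fintype.card_pi]

theorem lamK_degree (i : Fin k) (x : Fin (n i)) :
    (lamK k lam n).degree ⟨i, x⟩ = lam * ∏ j ∈ univ.erase i, n j := by
  have h := Fintype.card_filter_piFinset_eq_of_mem (fun i => (univ : Finset (Fin (n i)))) i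
    (mem_univ x)
  simp only [Fintype.piFinset_univ, card_univ, Fintype.card_fin] at h
  change #{e : Fin lam × ∀ i, Fin (n i) | decide (e.2 i = x) = true} = _
  simp only [decide_eq_true_eq]
  rw [Fintype.card_filter_snd (α := Fin lam) (fun t : ∀ j, Fin (n j) => t i = x), h,
    Fintype.card_fin]

theorem lamK_sum_windowDeg (f : ℕ → (lamK k lam n).E) (j s : ℕ) (i : Fin k) :
    ∑ x : Fin (n i), (lamK k lam n).windowDeg f j s ⟨i, x⟩ = s := by
  simp only [windowDeg, lamK, decide_eq_true_eq]
  rw [← card_eq_sum_card_fiberwise (fun _ _ => mem_coe.2 (mem_univ _)), card_range]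

theorem lamK_count_restrict_eq {f : ℕ → (lamK k lam n).E} (hf : (lamK k lam n).IsOrdering f)
    (S : Finset (Fin k)) (a : ∀ i : S, Fin (n i)) :
    Nat.count (fun j => S.restrict (f j).2 = a) (lamK k lam n).edgeCard
      = lam * ∏ i ∈ Sᶜ, n i := by
  rw [Nat.count_eq_card_filter_range, hf.card_filter_range (fun e => S.restrict e.2 = a)]
  have h := Fintype.card_filter_restrict_eq (β := fun i => Fin (n i)) S a
  simp only [Fintype.card_fin] at h
  change #{e : Fin lam × ∀ i, Fin (n i) | S.restrict e.2 = a} = _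
  rw [Fintype.card_filter_snd (α := Fin lam) (fun t : ∀ j, Fin (n j) => S.restrict t = a), h,
    Fintype.card_fin]

theorem lamK_apply_add_eq_of_msOK {f : ℕ → (lamK k lam n).E} (hf : (lamK k lam n).IsOrdering f)
    {i : Fin k} {a c d p : ℕ} (hd : lam * ∏ l ∈ univ.erase i, n l = d) (hc : c < d)
    (hp : c * n i = p) (hok : (lamK k lam n).msOK f (a * d + c) ((a * d + c) * n i))
    {j : ℕ} (hj : j + p < (lamK k lam n).edgeCard) : (f (j + p)).2 i = (f j).2 i := by
  have hε : (lamK k lam n).edgeCard = d * n i := by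
    rw [lamK_edgeCard, ← mul_prod_erase univ n (mem_univ i), ← hd]
    ring
  have hpε : p < (lamK k lam n).edgeCard := by
    rw [hε, ← hp]
    exact Nat.mul_lt_mul_of_pos_right hc ((f 0).2 i).pos
  have hok' : (lamK k lam n).msOK f (a * d + c) (a * (lamK k lam n).edgeCard + p) := by
    rwa [hε, ← hp, ← mul_assoc, ← add_mul]
  -- the windows at the `n i` vertices of part `i` hold `p = c * n i` incidences, each at most `c`
  have hwin (j' : ℕ) (hj' : j' + p ≤ (lamK k lam n).edgeCard) (x : Fin (n i)) :
      (lamK k lam n).windowDeg f j' p ⟨i, x⟩ = c := by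
    have hle (y : Fin (n i)) : (lamK k lam n).windowDeg f j' p ⟨i, y⟩ ≤ c := by
      have h := hf.mul_degree_add_windowDeg_le (v := (⟨i, y⟩ : Σ l, Fin (n l))) hok' hpε hj'
      rw [lamK_degree, hd] at h
      omega
    refine (sum_eq_sum_iff_of_le fun y _ => hle y).1 ?_ x (mem_univ x)
    rw [lamK_sum_windowDeg, sum_const, card_univ, Fintype.card_fin, smul_eq_mul, ← hp, mul_comm]
  have hinc := inc_add_eq_of_windowDeg_eq (f := f) (v := ⟨i, (f j).2 i⟩)
    ((hwin j hj.le _).trans (hwin (j + 1) (by omega) _).symm)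
  simpa [lamK] using hinc

theorem lamK_count_bounds_of_msOK {f : ℕ → (lamK k lam n).E} (hf : (lamK k lam n).IsOrdering f)
    {S : Finset (Fin k)} {m d a c : ℕ} (hS : ∀ i ∈ S, n i = m)
    (hd : ∀ i ∈ S, lam * ∏ l ∈ univ.erase i, n l = d) (hc : c < d)
    (hok : (lamK k lam n).msOK f (a * d + c) ((a * d + c) * m)) (hdvd : ¬ m ^ (#S - 1) ∣ c) :
    (c / m ^ (#S - 1) + 1) * (d / c) ≤ lam * ∏ i ∈ Sᶜ, n i
      ∧ lam * ∏ i ∈ Sᶜ, n i ≤ c / m ^ (#S - 1) * (d / c + 1) := by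
  obtain ⟨i, hi⟩ : S.Nonempty := nonempty_iff_ne_empty.2 fun h => hdvd (by simp [h])
  have hm : 0 < m := hS i hi ▸ ((f 0).2 i).pos
  have hε : (lamK k lam n).edgeCard = d * m := by
    rw [lamK_edgeCard, ← mul_prod_erase univ n (mem_univ i), hS i hi, ← hd i hi]
    ring
  have hper (j : ℕ) (hj : j + c * m < (lamK k lam n).edgeCard) :
      S.restrict (f (j + c * m)).2 = S.restrict (f j).2 := by
    funext ⟨i', hi'⟩
    exact lamK_apply_add_eq_of_msOK hf (hd i' hi') hc (by rw [hS i' hi']) (by rwa [hS i' hi']) hj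
  have hcard : Fintype.card (∀ i : S, Fin (n i)) = m ^ (#S - 1) * m := by
    rw [Fintype.card_pi]
    simp only [Fintype.card_fin]
    rw [prod_coe_sort S n, prod_congr rfl hS, prod_const, pow_sub_one_mul (card_ne_zero_of_mem hi)]
  have key := count_bounds_of_periodic_of_not_dvd _ hper (lamK_count_restrict_eq hf S)
    (by rwa [hcard, Nat.mul_dvd_mul_iff_right hm])
  rwa [hcard, hε, Nat.mul_div_mul_right _ _ hm, Nat.mul_div_mul_right _ _ hm] at key

end CompleteMultipartite

/-- Lemma (necessary condition, non-cyclic): if `ms_r(λK_{n_1,…,n_k}) = r·n_1`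
then `n_1^(u-1) ∣ r_2`, or `r_2 > 0` and the floor inequalities hold. -/
theorem ms_eq_necessary
    (k lam u : ℕ) (n : Fin k → ℕ)
    (hu1 : 1 ≤ u) (huk : u ≤ k)
    (hpos : ∀ i, 1 ≤ n i)
    (heq : ∀ i : Fin k, (i : ℕ) < u → n i = n ⟨0, by omega⟩)
    (N N' : ℕ)
    (hN : N = ∏ i ∈ Finset.univ.filter (fun i : Fin k => (i : ℕ) ≠ 0), n i)
    (hN' : N' = ∏ i ∈ Finset.univ.filter (fun i : Fin k => u ≤ (i : ℕ)), n i)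
    (r r1 r2 : ℕ)
    (hrdec : r = r1 * (lam * N) + r2) (hr2 : r2 < lam * N)
    (hms : (lamK k lam n).msr r = r * n ⟨0, by omega⟩) :
    (n ⟨0, by omega⟩) ^ (u - 1) ∣ r2 ∨ (0 < r2 ∧ (r2 / (n ⟨0, by omega⟩) ^ (u - 1) + 1) * (lam * N / r2) ≤ lam * N' ∧ lam * N' ≤ (r2 / (n ⟨0, by omega⟩) ^ (u - 1)) * (lam * N / r2 + 1)) := by
  classical
  set i₀ : Fin k := ⟨0, by omega⟩
  refine or_iff_not_imp_left.2 fun hdvd => ⟨Nat.pos_of_ne_zero fun h => hdvd (h ▸ dvd_zero _), ?_⟩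
  set S : Finset (Fin k) := univ.filter fun i => (i : ℕ) < u
  have hS (i : Fin k) (hi : i ∈ S) : n i = n i₀ := heq i (mem_filter.1 hi).2
  have hdeg (i : Fin k) (hi : i ∈ S) : lam * ∏ l ∈ univ.erase i, n l = lam * N := by
    rw [prod_erase_univ_eq_of_eq (hS i hi), hN, ← filter_ne']
    simp [i₀, Fin.ext_iff]
  have hcardS : #S = u := by rw [Fin.card_filter_val_lt, min_eq_right huk]
  have hcompl : ∏ i ∈ Sᶜ, n i = N' := by
    rw [hN', compl_filter]
    simp only [not_lt]
  obtain ⟨f, hf, hok⟩ := (lamK k lam n).exists_isOrdering_msOK_msr r (v := ⟨i₀, ⟨0, hpos i₀⟩⟩)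
    (by rw [lamK_degree, hdeg i₀ (mem_filter.2 ⟨mem_univ _, hu1⟩)]; omega)
  rw [hms, hrdec] at hok
  rw [← hcardS, ← hcompl]
  exact lamK_count_bounds_of_msOK hf hS hdeg hr2 hok (by rwa [hcardS])
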